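/- arXiv:2203.13745 — 4 statements merged into one kernel-verified Lean document; each statement's English description precedes it below -/
import Mathlib

section
/- Sewing Lemma (existence and regularity): Let E be a real Banach space, T > 0, and exponents 0 < α ≤ 1 < β. Let A : Δ₂ → E satisfy A_{t,t} = 0 for all t ∈ [0,T], ‖A‖_α < ∞ and ‖δA‖_β < ∞. Then there exists a constant c > 0 depending only on β, and a function 𝒜 : [0,T] → E with 𝒜(0) = 0, such that for all 0 ≤ s ≤ t ≤ T one has ‖(𝒜(t) − 𝒜(s)) − A_{s,t}‖_E ≤ c ‖δA‖_β (t−s)^β; consequently ‖𝒜(t) − 𝒜(s)‖_E ≤ (‖A‖_α + c ‖δA‖_β T^{β−α}) (t−s)^α for all 0 ≤ s ≤ t ≤ T, i.e. 𝒜 is α-Hölder continuous on [0,T]. -/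
/-!
Sew `A` along the dyadic grids `kT/2ⁿ` of `[0,T]`, clamped to `[s,t]`: this gives partition sums
`Sₙ(s,t)` of `[s,t]`. Passing from level `n` to `n+1` splits every cell, so `Sₙ₊₁ - Sₙ` is a sum
of second increments `δA` over cells of length `≤ T/2ⁿ`, bounded by `C (T/2ⁿ)^(β-1) (t-s)`. For
`β > 1` this is geometric, and `Sₙ(s,t)` converges to some `L(s,t)`. All `Sₙ` share one grid, so
`Sₙ(a,c) - Sₙ(a,b) - Sₙ(b,c)` vanishes except on the cell containing `b`, where it is a `δA`;
hence it tends to `0`, `L` is additive, and `𝒜(t) = L(0,t)`. Finally, at the level `m` with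
`t - s ≤ T/2ᵐ < 2(t - s)` at most one grid point lies in `(s,t)`, so `Sₘ(s,t) - A(s,t)` is a
single `δA`, while the geometric tail from `m` on is `≤ 2^(β-1) C (t-s)^β / (1 - 2^(1-β))`.
-/

open Finset Filter Topology

namespace Sewing

section Increments

variable {E : Type*} [AddCommGroup E]

def delta (A : ℝ → ℝ → E) (s u t : ℝ) : E := A s t - A s u - A u t

lemma delta_self_left (A : ℝ → ℝ → E) (s t : ℝ) : delta A s s t = -A s s := by
  simp only [delta]; abel

lemma delta_self_right (A : ℝ → ℝ → E) (s u : ℝ) : delta A s u u = -A u u := by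
  simp only [delta]; abel

lemma sum_range_two_mul {M : Type*} [AddCommMonoid M] (f : ℕ → M) (N : ℕ) :
    ∑ k ∈ range (2 * N), f k = ∑ k ∈ range N, (f (2 * k) + f (2 * k + 1)) := by
  induction N with
  | zero => simp
  | succ N ih => rw [mul_add, mul_one, sum_range_succ, sum_range_succ, sum_range_succ, ih, add_assoc]

lemma sum_delta_range (A : ℝ → ℝ → E) (c : ℕ → ℝ) (N : ℕ) :
    ∑ k ∈ range N, delta A (c 0) (c k) (c (k + 1))
      = A (c 0) (c N) - A (c 0) (c 0) - ∑ k ∈ range N, A (c k) (c (k + 1)) := by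
  simp only [delta, sum_sub_distrib, sum_range_sub fun k => A (c 0) (c k)]

end Increments

lemma norm_sum_le_of_subsingleton_ne_zero {ι E : Type*} [NormedAddCommGroup E] {s : Finset ι}
    {f : ι → E} {M : ℝ} (hM : 0 ≤ M) (hf : ∀ i ∈ s, ‖f i‖ ≤ M)
    (huniq : ∀ i ∈ s, ∀ j ∈ s, f i ≠ 0 → f j ≠ 0 → i = j) : ‖∑ i ∈ s, f i‖ ≤ M := by
  by_cases h : ∀ i ∈ s, f i = 0
  · rw [sum_eq_zero h, norm_zero]
    exact hM
  · simp only [not_forall] at h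
    obtain ⟨i, hi, hfi⟩ := h
    rw [sum_eq_single_of_mem i hi fun j hj hji => by_contra fun hfj => hji (huniq j hj i hi hfj hfi)]
    exact hf i hi

lemma rpow_le_rpow_sub_mul_rpow {x h α β : ℝ} (hx : 0 ≤ x) (hxh : x ≤ h) (hαβ : α ≤ β)
    (hβ : β ≠ 0) : x ^ β ≤ h ^ (β - α) * x ^ α := by
  rcases hx.eq_or_lt with rfl | hx
  · rw [Real.zero_rpow hβ]
    exact mul_nonneg (Real.rpow_nonneg hxh _) (Real.rpow_nonneg le_rfl _)
  · calc x ^ β = x ^ (β - α) * x ^ α := by rw [← Real.rpow_add hx, sub_add_cancel]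
      _ ≤ h ^ (β - α) * x ^ α := by gcongr

lemma div_two_pow_rpow {T : ℝ} (hT : 0 ≤ T) (γ : ℝ) (n : ℕ) :
    (T / 2 ^ n) ^ γ = T ^ γ * ((2 : ℝ) ^ (-γ)) ^ n := by
  rw [Real.div_rpow hT (by positivity), ← Real.rpow_natCast, ← Real.rpow_natCast (2 ^ (-γ)),
    ← Real.rpow_mul zero_le_two, ← Real.rpow_mul zero_le_two, neg_mul, Real.rpow_neg zero_le_two,
    mul_comm γ, div_eq_mul_inv]

lemma tendsto_div_two_pow_rpow {T γ : ℝ} (hT : 0 ≤ T) (hγ : 0 < γ) :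
    Tendsto (fun n : ℕ => (T / 2 ^ n) ^ γ) atTop (𝓝 0) := by
  simp_rw [div_two_pow_rpow hT]
  simpa using (tendsto_pow_atTop_nhds_zero_of_lt_one (by positivity)
    (Real.rpow_lt_one_of_one_lt_of_neg one_lt_two (neg_lt_zero.2 hγ))).const_mul (T ^ γ)

section Grid

variable {a b c x y : ℝ}

def clamp (a b x : ℝ) : ℝ := max a (min b x)

lemma le_clamp (a b x : ℝ) : a ≤ clamp a b x := le_max_left _ _

lemma clamp_le (hab : a ≤ b) (x : ℝ) : clamp a b x ≤ b := max_le hab (min_le_left _ _)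

lemma clamp_mono (a b : ℝ) : Monotone (clamp a b) :=
  fun _ _ h => max_le_max le_rfl (min_le_min le_rfl h)

lemma clamp_sub_clamp_le (a b : ℝ) (h : x ≤ y) : clamp a b y - clamp a b x ≤ y - x := by
  simp only [clamp, max_def, min_def]
  split_ifs <;> linarith

lemma clamp_of_le (b : ℝ) (hx : x ≤ a) : clamp a b x = a :=
  max_eq_left ((min_le_right _ _).trans hx)

lemma clamp_of_ge (hab : a ≤ b) (hx : b ≤ x) : clamp a b x = b := by
  rw [clamp, min_eq_left hx, max_eq_right hab]

lemma clamp_eq_clamp_of_le (a : ℝ) (hbc : b ≤ c) (hx : x ≤ b) : clamp a c x = clamp a b x := by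
  rw [clamp, clamp, min_eq_right (hx.trans hbc), min_eq_right hx]

lemma clamp_eq_clamp_of_ge (hab : a ≤ b) (hbc : b ≤ c) (hx : b ≤ x) :
    clamp a c x = clamp b c x := by
  have hb : b ≤ min c x := le_min hbc hx
  rw [clamp, clamp, max_eq_right (hab.trans hb), max_eq_right hb]

noncomputable def gridPt (T : ℝ) (n k : ℕ) : ℝ := k * (T / 2 ^ n)

lemma gridPt_zero (T : ℝ) (n : ℕ) : gridPt T n 0 = 0 := by simp [gridPt]

lemma gridPt_two_pow (T : ℝ) (n : ℕ) : gridPt T n (2 ^ n) = T := by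
  simp only [gridPt]; push_cast; field_simp

lemma gridPt_succ_sub (T : ℝ) (n k : ℕ) : gridPt T n (k + 1) - gridPt T n k = T / 2 ^ n := by
  simp only [gridPt]; push_cast; ring

lemma gridPt_mono {T : ℝ} (hT : 0 ≤ T) (n : ℕ) : Monotone (gridPt T n) :=
  fun _ _ h => mul_le_mul_of_nonneg_right (Nat.cast_le.2 h) (by positivity)

lemma gridPt_succ_two_mul (T : ℝ) (n k : ℕ) : gridPt T (n + 1) (2 * k) = gridPt T n k := by
  simp only [gridPt, pow_succ]; push_cast; field_simp

lemma eq_of_gridPt_mem_Ioo {T s t : ℝ} (hT : 0 ≤ T) {m : ℕ} (hm : t - s ≤ T / 2 ^ m) {i j : ℕ}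
    (hi : gridPt T m i ∈ Set.Ioo s t) (hj : gridPt T m j ∈ Set.Ioo s t) : i = j := by
  have hfar : ∀ i j : ℕ, i < j → gridPt T m i ∈ Set.Ioo s t → gridPt T m j ∈ Set.Ioo s t →
      False := by
    intro i j hij hi hj
    linarith [gridPt_mono hT m (Nat.succ_le_of_lt hij), gridPt_succ_sub T m i, hi.1, hj.2]
  rcases lt_trichotomy i j with h | h | h
  exacts [(hfar i j h hi hj).elim, h, (hfar j i h hj hi).elim]

lemma exists_dyadic_mesh {T d : ℝ} (hd : 0 < d) (hdT : d ≤ T) :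
    ∃ m : ℕ, d ≤ T / 2 ^ m ∧ T / 2 ^ m < 2 * d := by
  obtain ⟨m, hle, hlt⟩ := exists_nat_pow_near ((one_le_div hd).2 hdT) one_lt_two
  refine ⟨m, (le_div_iff₀ (by positivity)).2 ?_, (div_lt_iff₀ (by positivity)).2 ?_⟩
  · rwa [le_div_iff₀ hd, mul_comm] at hle
  · rw [div_lt_iff₀ hd, pow_succ] at hlt
    linarith

end Grid

section Sums

variable {E : Type*} [NormedAddCommGroup E] {A : ℝ → ℝ → E} {T C β a b c s t : ℝ}

/-- Grid points outside `[s, t]` are clamped to `s` or `t`, so they only add degenerate cells. -/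
noncomputable def dyadicSum (A : ℝ → ℝ → E) (T s t : ℝ) (n : ℕ) : E :=
  ∑ k ∈ range (2 ^ n), A (clamp s t (gridPt T n k)) (clamp s t (gridPt T n (k + 1)))

noncomputable def sewingMap (A : ℝ → ℝ → E) (T s t : ℝ) : E :=
  limUnder atTop (dyadicSum A T s t)

noncomputable def sewingConst (β : ℝ) : ℝ := 1 + 2 ^ (β - 1) / (1 - 2 ^ (1 - β))

lemma two_rpow_one_sub_lt_one (hβ : 1 < β) : (2 : ℝ) ^ (1 - β) < 1 :=
  Real.rpow_lt_one_of_one_lt_of_neg one_lt_two (by linarith)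

lemma sewingConst_pos (hβ : 1 < β) : 0 < sewingConst β := by
  have := sub_pos.2 (two_rpow_one_sub_lt_one hβ)
  unfold sewingConst
  positivity

structure HasDeltaBound (A : ℝ → ℝ → E) (T C β : ℝ) : Prop where
  apply_self : ∀ t ∈ Set.Icc (0 : ℝ) T, A t t = 0
  norm_delta_le : ∀ s u t : ℝ, 0 ≤ s → s ≤ u → u ≤ t → t ≤ T →
    ‖delta A s u t‖ ≤ C * (t - s) ^ β

namespace HasDeltaBound

lemma const_nonneg (hA : HasDeltaBound A T C β) (hT : 0 < T) : 0 ≤ C := by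
  have h := hA.norm_delta_le 0 0 T le_rfl le_rfl hT.le le_rfl
  rw [delta_self_left, norm_neg, hA.apply_self 0 ⟨le_rfl, hT.le⟩, norm_zero, sub_zero] at h
  exact nonneg_of_mul_nonneg_left h (Real.rpow_pos_of_pos hT β)

lemma norm_delta_le_mesh (hA : HasDeltaBound A T C β) (hβ : 1 ≤ β) (hC : 0 ≤ C) {x y z h : ℝ}
    (hx : 0 ≤ x) (hxy : x ≤ y) (hyz : y ≤ z) (hzT : z ≤ T) (hzx : z - x ≤ h) :
    ‖delta A x y z‖ ≤ C * h ^ (β - 1) * (z - x) := by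
  have hpow := rpow_le_rpow_sub_mul_rpow (sub_nonneg.2 (hxy.trans hyz)) hzx hβ (by positivity)
  rw [Real.rpow_one] at hpow
  calc ‖delta A x y z‖ ≤ C * (z - x) ^ β := hA.norm_delta_le x y z hx hxy hyz hzT
    _ ≤ C * h ^ (β - 1) * (z - x) := by rw [mul_assoc]; gcongr

lemma norm_dyadicSum_succ_sub_le (hA : HasDeltaBound A T C β) (hβ : 1 ≤ β) (hC : 0 ≤ C)
    (hs : 0 ≤ s) (hst : s ≤ t) (htT : t ≤ T) (n : ℕ) :
    ‖dyadicSum A T s t (n + 1) - dyadicSum A T s t n‖ ≤ C * (T / 2 ^ n) ^ (β - 1) * (t - s) := by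
  have hT : 0 ≤ T := hs.trans (hst.trans htT)
  let x : ℕ → ℝ := fun k => clamp s t (gridPt T n k)
  let y : ℕ → ℝ := fun k => clamp s t (gridPt T (n + 1) (2 * k + 1))
  have hrefine : dyadicSum A T s t (n + 1) - dyadicSum A T s t n
      = -∑ k ∈ range (2 ^ n), delta A (x k) (y k) (x (k + 1)) := by
    rw [dyadicSum, dyadicSum, pow_succ', sum_range_two_mul, ← sum_sub_distrib, ← sum_neg_distrib]
    refine sum_congr rfl fun k _ => ?_
    rw [gridPt_succ_two_mul, show 2 * k + 1 + 1 = 2 * (k + 1) by ring, gridPt_succ_two_mul]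
    simp only [delta, x, y]
    abel
  have hxy : ∀ k, x k ≤ y k := fun k => clamp_mono s t <| by
    rw [← gridPt_succ_two_mul T n k]; exact gridPt_mono hT _ (Nat.le_succ _)
  have hyx : ∀ k, y k ≤ x (k + 1) := fun k => clamp_mono s t <| by
    rw [← gridPt_succ_two_mul T n (k + 1)]; exact gridPt_mono hT _ (by omega)
  have hcell : ∀ k, x (k + 1) - x k ≤ T / 2 ^ n := fun k =>
    (clamp_sub_clamp_le s t (gridPt_mono hT n (Nat.le_succ k))).trans_eq (gridPt_succ_sub T n k)
  have hx0 : x 0 = s := by simp only [x, gridPt_zero, clamp_of_le t hs]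
  have hxN : x (2 ^ n) = t := by simp only [x, gridPt_two_pow, clamp_of_ge hst htT]
  rw [hrefine, norm_neg]
  calc ‖∑ k ∈ range (2 ^ n), delta A (x k) (y k) (x (k + 1))‖
      ≤ ∑ k ∈ range (2 ^ n), C * (T / 2 ^ n) ^ (β - 1) * (x (k + 1) - x k) :=
        norm_sum_le_of_le _ fun k _ => hA.norm_delta_le_mesh hβ hC (hs.trans (le_clamp _ _ _))
          (hxy k) (hyx k) ((clamp_le hst _).trans htT) (hcell k)
    _ = C * (T / 2 ^ n) ^ (β - 1) * (t - s) := by rw [← mul_sum, sum_range_sub x, hx0, hxN]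

lemma norm_clamp_defect_le (hA : HasDeltaBound A T C β) (hβ : 1 ≤ β) (hC : 0 ≤ C) (ha : 0 ≤ a)
    (hab : a ≤ b) (hbc : b ≤ c) (hcT : c ≤ T) {p q h : ℝ} (hpq : p ≤ q) (hqp : q - p ≤ h) :
    ‖A (clamp a c p) (clamp a c q) - A (clamp a b p) (clamp a b q) - A (clamp b c p) (clamp b c q)‖
      ≤ C * h ^ (β - 1) * (q - p) := by
  have hAbb : A b b = 0 := hA.apply_self b ⟨ha.trans hab, hbc.trans hcT⟩
  have hCh : 0 ≤ C * h ^ (β - 1) := mul_nonneg hC (Real.rpow_nonneg ((sub_nonneg.2 hpq).trans hqp) _)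
  have hbound : 0 ≤ C * h ^ (β - 1) * (q - p) := mul_nonneg hCh (sub_nonneg.2 hpq)
  rcases le_or_gt q b with hqb | hbq
  · rw [clamp_eq_clamp_of_le a hbc (hpq.trans hqb), clamp_eq_clamp_of_le a hbc hqb,
      clamp_of_le c (hpq.trans hqb), clamp_of_le c hqb, hAbb, sub_self, sub_zero, norm_zero]
    exact hbound
  rcases le_or_gt b p with hbp | hpb
  · rw [clamp_eq_clamp_of_ge hab hbc hbp, clamp_eq_clamp_of_ge hab hbc (hbp.trans hpq),
      clamp_of_ge hab hbp, clamp_of_ge hab (hbp.trans hpq), hAbb, sub_zero, sub_self, norm_zero]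
    exact hbound
  -- now `p < b < q`, and the defect is the second increment of `A` at `b`
  have hlip := clamp_sub_clamp_le a c hpq
  rw [clamp_eq_clamp_of_le a hbc hpb.le, clamp_eq_clamp_of_ge hab hbc hbq.le] at hlip ⊢
  rw [clamp_of_ge hab hbq.le, clamp_of_le c hpb.le]
  calc _ ≤ C * h ^ (β - 1) * (clamp b c q - clamp a b p) :=
        hA.norm_delta_le_mesh hβ hC (ha.trans (le_clamp _ _ _)) (clamp_le hab _) (le_clamp _ _ _)
          ((clamp_le hbc _).trans hcT) (hlip.trans hqp)
    _ ≤ C * h ^ (β - 1) * (q - p) := mul_le_mul_of_nonneg_left hlip hCh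

lemma norm_dyadicSum_defect_le (hA : HasDeltaBound A T C β) (hβ : 1 ≤ β) (hC : 0 ≤ C)
    (ha : 0 ≤ a) (hab : a ≤ b) (hbc : b ≤ c) (hcT : c ≤ T) (n : ℕ) :
    ‖dyadicSum A T a c n - dyadicSum A T a b n - dyadicSum A T b c n‖
      ≤ C * (T / 2 ^ n) ^ (β - 1) * T := by
  have hT : 0 ≤ T := ha.trans (hab.trans (hbc.trans hcT))
  rw [dyadicSum, dyadicSum, dyadicSum, ← sum_sub_distrib, ← sum_sub_distrib]
  calc _ ≤ ∑ k ∈ range (2 ^ n), C * (T / 2 ^ n) ^ (β - 1) * (gridPt T n (k + 1) - gridPt T n k) :=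
        norm_sum_le_of_le _ fun k _ => hA.norm_clamp_defect_le hβ hC ha hab hbc hcT
          (gridPt_mono hT n (Nat.le_succ k)) (gridPt_succ_sub T n k).le
    _ = C * (T / 2 ^ n) ^ (β - 1) * T := by
        rw [← mul_sum, sum_range_sub (gridPt T n), gridPt_two_pow, gridPt_zero, sub_zero]

lemma norm_dyadicSum_sub_le_of_le_mesh (hA : HasDeltaBound A T C β) (hβ : 0 ≤ β) (hC : 0 ≤ C)
    (hs : 0 ≤ s) (hst : s ≤ t) (htT : t ≤ T) {m : ℕ} (hm : t - s ≤ T / 2 ^ m) :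
    ‖dyadicSum A T s t m - A s t‖ ≤ C * (t - s) ^ β := by
  have hT : 0 ≤ T := hs.trans (hst.trans htT)
  let x : ℕ → ℝ := fun k => clamp s t (gridPt T m k)
  have hx0 : x 0 = s := by simp only [x, gridPt_zero, clamp_of_le t hs]
  have hxN : x (2 ^ m) = t := by simp only [x, gridPt_two_pow, clamp_of_ge hst htT]
  have hAss : A s s = 0 := hA.apply_self s ⟨hs, hst.trans htT⟩
  have hsum := sum_delta_range A x (2 ^ m)
  rw [hx0, hxN, hAss, sub_zero] at hsum
  have hsupport : ∀ k, delta A s (x k) (x (k + 1)) ≠ 0 → gridPt T m k ∈ Set.Ioo s t := by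
    intro k hk
    constructor
    · by_contra! h
      rw [show x k = s from clamp_of_le t h, delta_self_left, hAss, neg_zero] at hk
      exact hk rfl
    · by_contra! h
      have hAtt : A t t = 0 := hA.apply_self t ⟨hs.trans hst, htT⟩
      rw [show x k = t from clamp_of_ge hst h,
        show x (k + 1) = t from clamp_of_ge hst (h.trans (gridPt_mono hT m (Nat.le_succ k))),
        delta_self_right, hAtt, neg_zero] at hk
      exact hk rfl
  rw [← norm_neg, neg_sub]
  change ‖A s t - ∑ k ∈ range (2 ^ m), A (x k) (x (k + 1))‖ ≤ _
  rw [← hsum]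
  refine norm_sum_le_of_subsingleton_ne_zero (by positivity) (fun k _ => ?_)
    fun i _ j _ hi hj => eq_of_gridPt_mem_Ioo hT hm (hsupport i hi) (hsupport j hj)
  calc ‖delta A s (x k) (x (k + 1))‖ ≤ C * (x (k + 1) - s) ^ β :=
        hA.norm_delta_le _ _ _ hs (le_clamp _ _ _)
          (clamp_mono s t (gridPt_mono hT m (Nat.le_succ k))) ((clamp_le hst _).trans htT)
    _ ≤ C * (t - s) ^ β := by
        gcongr
        · exact sub_nonneg.2 (le_clamp _ _ _)
        · exact clamp_le hst _

lemma dist_dyadicSum_succ_le (hA : HasDeltaBound A T C β) (hβ : 1 ≤ β) (hC : 0 ≤ C)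
    (hs : 0 ≤ s) (hst : s ≤ t) (htT : t ≤ T) (n : ℕ) :
    dist (dyadicSum A T s t n) (dyadicSum A T s t (n + 1))
      ≤ C * (t - s) * T ^ (β - 1) * ((2 : ℝ) ^ (1 - β)) ^ n := by
  rw [dist_comm, dist_eq_norm]
  calc _ ≤ C * (T / 2 ^ n) ^ (β - 1) * (t - s) := hA.norm_dyadicSum_succ_sub_le hβ hC hs hst htT n
    _ = _ := by rw [div_two_pow_rpow (hs.trans (hst.trans htT)), neg_sub]; ring

variable [CompleteSpace E]

lemma tendsto_dyadicSum (hA : HasDeltaBound A T C β) (hβ : 1 < β) (hC : 0 ≤ C)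
    (hs : 0 ≤ s) (hst : s ≤ t) (htT : t ≤ T) :
    Tendsto (dyadicSum A T s t) atTop (𝓝 (sewingMap A T s t)) :=
  (cauchySeq_of_le_geometric _ _ (two_rpow_one_sub_lt_one hβ)
    (hA.dist_dyadicSum_succ_le hβ.le hC hs hst htT)).tendsto_limUnder

lemma norm_dyadicSum_sub_sewingMap_le (hA : HasDeltaBound A T C β) (hβ : 1 < β) (hC : 0 ≤ C)
    (hs : 0 ≤ s) (hst : s ≤ t) (htT : t ≤ T) (n : ℕ) :
    ‖dyadicSum A T s t n - sewingMap A T s t‖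
      ≤ C * (t - s) * (T / 2 ^ n) ^ (β - 1) / (1 - 2 ^ (1 - β)) := by
  rw [← dist_eq_norm, div_two_pow_rpow (hs.trans (hst.trans htT)), neg_sub, ← mul_assoc]
  exact dist_le_of_le_geometric_of_tendsto _ _ (two_rpow_one_sub_lt_one hβ)
    (hA.dist_dyadicSum_succ_le hβ.le hC hs hst htT) (hA.tendsto_dyadicSum hβ hC hs hst htT) n

lemma sewingMap_add (hA : HasDeltaBound A T C β) (hβ : 1 < β) (hC : 0 ≤ C)
    (ha : 0 ≤ a) (hab : a ≤ b) (hbc : b ≤ c) (hcT : c ≤ T) :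
    sewingMap A T a b + sewingMap A T b c = sewingMap A T a c := by
  have hT : 0 ≤ T := ha.trans (hab.trans (hbc.trans hcT))
  have hdefect : Tendsto (fun n => dyadicSum A T a c n - dyadicSum A T a b n - dyadicSum A T b c n)
      atTop (𝓝 0) := by
    refine squeeze_zero_norm (hA.norm_dyadicSum_defect_le hβ.le hC ha hab hbc hcT) ?_
    simpa using ((tendsto_div_two_pow_rpow hT (sub_pos.2 hβ)).const_mul C).mul_const T
  have hlim := ((hA.tendsto_dyadicSum hβ hC ha (hab.trans hbc) hcT).sub
    (hA.tendsto_dyadicSum hβ hC ha hab (hbc.trans hcT))).sub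
    (hA.tendsto_dyadicSum hβ hC (ha.trans hab) hbc hcT)
  have hzero := tendsto_nhds_unique hlim hdefect
  rwa [sub_sub, sub_eq_zero, eq_comm] at hzero

lemma sewingMap_self (hA : HasDeltaBound A T C β) (hβ : 1 < β) (hC : 0 ≤ C) (hs : 0 ≤ s)
    (hsT : s ≤ T) : sewingMap A T s s = 0 :=
  add_eq_left.1 (hA.sewingMap_add hβ hC hs le_rfl le_rfl hsT)

lemma norm_sewingMap_sub_le (hA : HasDeltaBound A T C β) (hβ : 1 < β) (hC : 0 ≤ C)
    (hs : 0 ≤ s) (hst : s ≤ t) (htT : t ≤ T) :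
    ‖sewingMap A T s t - A s t‖ ≤ sewingConst β * C * (t - s) ^ β := by
  rcases hst.eq_or_lt with rfl | hlt
  · rw [hA.sewingMap_self hβ hC hs htT, hA.apply_self s ⟨hs, htT⟩, sub_zero, norm_zero, sub_self,
      Real.zero_rpow (by linarith), mul_zero]
  have hts : 0 < t - s := sub_pos.2 hlt
  obtain ⟨m, hm_le, hm_lt⟩ := exists_dyadic_mesh hts (by linarith)
  have hr : 0 < 1 - (2 : ℝ) ^ (1 - β) := sub_pos.2 (two_rpow_one_sub_lt_one hβ)
  calc ‖sewingMap A T s t - A s t‖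
      ≤ ‖dyadicSum A T s t m - sewingMap A T s t‖ + ‖dyadicSum A T s t m - A s t‖ :=
        norm_sub_le_norm_sub_add_norm_sub _ _ _ |>.trans_eq (by rw [norm_sub_rev])
    _ ≤ C * (t - s) * (T / 2 ^ m) ^ (β - 1) / (1 - 2 ^ (1 - β)) + C * (t - s) ^ β :=
        add_le_add (hA.norm_dyadicSum_sub_sewingMap_le hβ hC hs hst htT m)
          (hA.norm_dyadicSum_sub_le_of_le_mesh (by linarith) hC hs hst htT hm_le)
    _ ≤ C * (t - s) * (2 * (t - s)) ^ (β - 1) / (1 - 2 ^ (1 - β)) + C * (t - s) ^ β := by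
        gcongr
        exact hts.le.trans hm_le
    _ = sewingConst β * C * (t - s) ^ β := by
        rw [Real.mul_rpow zero_le_two hts.le, Real.rpow_sub_one hts.ne', sewingConst]
        field_simp
        ring

end HasDeltaBound

end Sums

end Sewing

open Sewing

/-- Sewing Lemma (existence and regularity): for `0 < α ≤ 1 < β` there is a constant
`c > 0` depending only on `β` such that for every Banach space `E`, every `T > 0` and
every germ `A : Δ₂ → E` vanishing on the diagonal with `‖A‖_α ≤ Cα` and `‖δA‖_β ≤ Cδ`,
there is `𝒜 : [0,T] → E` with `𝒜(0) = 0`,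
`‖𝒜(t) − 𝒜(s) − A_{s,t}‖ ≤ c Cδ (t−s)^β` and consequently
`‖𝒜(t) − 𝒜(s)‖ ≤ (Cα + c Cδ T^{β−α}) (t−s)^α` for all `0 ≤ s ≤ t ≤ T`. -/
theorem sewing_lemma (β : ℝ) (hβ : 1 < β) :
    ∃ c : ℝ, 0 < c ∧
      ∀ (E : Type*) [NormedAddCommGroup E] [NormedSpace ℝ E] [CompleteSpace E]
        (T α : ℝ), 0 < T → 0 < α → α ≤ 1 →
        ∀ (A : ℝ → ℝ → E) (Cα Cδ : ℝ),
        (∀ t ∈ Set.Icc (0 : ℝ) T, A t t = 0) →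
        (∀ s t : ℝ, 0 ≤ s → s ≤ t → t ≤ T → ‖A s t‖ ≤ Cα * (t - s) ^ α) →
        (∀ s u t : ℝ, 0 ≤ s → s ≤ u → u ≤ t → t ≤ T →
          ‖A s t - A s u - A u t‖ ≤ Cδ * (t - s) ^ β) →
        ∃ 𝒜 : ℝ → E, 𝒜 0 = 0 ∧
          (∀ s t : ℝ, 0 ≤ s → s ≤ t → t ≤ T →
            ‖(𝒜 t - 𝒜 s) - A s t‖ ≤ c * Cδ * (t - s) ^ β) ∧
          (∀ s t : ℝ, 0 ≤ s → s ≤ t → t ≤ T →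
            ‖𝒜 t - 𝒜 s‖ ≤ (Cα + c * Cδ * T ^ (β - α)) * (t - s) ^ α) := by
  refine ⟨sewingConst β, sewingConst_pos hβ, ?_⟩
  intro E _ _ _ T α hT _ hα1 A Cα Cδ hdiag hAα hδ
  have hA : HasDeltaBound A T Cδ β := ⟨hdiag, hδ⟩
  have hC : 0 ≤ Cδ := hA.const_nonneg hT
  have hincr : ∀ s t : ℝ, 0 ≤ s → s ≤ t → t ≤ T →
      sewingMap A T 0 t - sewingMap A T 0 s = sewingMap A T s t := fun s t hs hst htT => by
    rw [← hA.sewingMap_add hβ hC le_rfl hs hst htT, add_sub_cancel_left]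
  refine ⟨fun t => sewingMap A T 0 t, hA.sewingMap_self hβ hC le_rfl hT.le,
    fun s t hs hst htT => ?_, fun s t hs hst htT => ?_⟩
  · rw [hincr s t hs hst htT]
    exact hA.norm_sewingMap_sub_le hβ hC hs hst htT
  · have hts : (t - s) ^ β ≤ T ^ (β - α) * (t - s) ^ α :=
      rpow_le_rpow_sub_mul_rpow (by linarith) (by linarith) (by linarith) (by linarith)
    rw [hincr s t hs hst htT]
    calc ‖sewingMap A T s t‖ ≤ ‖A s t‖ + ‖sewingMap A T s t - A s t‖ := norm_le_insert' _ _
      _ ≤ Cα * (t - s) ^ α + sewingConst β * Cδ * (T ^ (β - α) * (t - s) ^ α) := by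
        gcongr
        · exact hAα s t hs hst htT
        · exact (hA.norm_sewingMap_sub_le hβ hC hs hst htT).trans
            (by gcongr; exact mul_nonneg (sewingConst_pos hβ).le hC)
      _ = (Cα + sewingConst β * Cδ * T ^ (β - α)) * (t - s) ^ α := by ring
end

section
/- Riemann-sum characterization of the sewing: Let E be a real Banach space, T > 0, β > 1 and C ≥ 0. Let A : Δ₂ → E with A_{t,t} = 0 for all t ∈ [0,T], and let f : [0,T] → E satisfy ‖f_{u,v} − A_{u,v}‖_E ≤ C (v−u)^β for all 0 ≤ u ≤ v ≤ T. Then for every 0 ≤ s ≤ t ≤ T and every sequence of partitions s = t₀ⁿ ≤ t₁ⁿ ≤ … ≤ t_{kₙ}ⁿ = t of [s,t] whose mesh size max_i (t_{i+1}ⁿ − t_iⁿ) tends to 0 as n → ∞, the Riemann sums Σ_{i=0}^{kₙ−1} A_{t_iⁿ, t_{i+1}ⁿ} converge in E to f(t) − f(s). -/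
open Filter

/-- Riemann-sum characterization of the sewing: if `β > 1`, `A : Δ₂ → E` vanishes on the
diagonal and `f : [0,T] → E` satisfies `‖f_{u,v} − A_{u,v}‖ ≤ C (v−u)^β` for all
`0 ≤ u ≤ v ≤ T`, then along any sequence of partitions of `[s,t] ⊆ [0,T]` with mesh
tending to `0`, the Riemann sums `Σ A_{tᵢⁿ, tᵢ₊₁ⁿ}` converge to `f(t) − f(s)`. -/
theorem sewing_riemann_sum
    {E : Type*} [NormedAddCommGroup E] [NormedSpace ℝ E]
    (T β C : ℝ) (hT : 0 < T) (hβ : 1 < β) (hC : 0 ≤ C)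
    (A : ℝ → ℝ → E) (f : ℝ → E)
    (hdiag : ∀ t ∈ Set.Icc (0 : ℝ) T, A t t = 0)
    (hf : ∀ u v : ℝ, 0 ≤ u → u ≤ v → v ≤ T → ‖(f v - f u) - A u v‖ ≤ C * (v - u) ^ β)
    (s t : ℝ) (hs : 0 ≤ s) (hst : s ≤ t) (htT : t ≤ T)
    (k : ℕ → ℕ) (pts : ℕ → ℕ → ℝ)
    (hstart : ∀ n, pts n 0 = s) (hend : ∀ n, pts n (k n) = t)
    (hmono : ∀ n, ∀ i < k n, pts n i ≤ pts n (i + 1))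
    (hmesh : ∀ ε : ℝ, 0 < ε → ∃ N : ℕ, ∀ n ≥ N, ∀ i < k n,
      pts n (i + 1) - pts n i ≤ ε) :
    Tendsto (fun n => ∑ i ∈ Finset.range (k n), A (pts n i) (pts n (i + 1)))
      atTop (nhds (f t - f s)) := by
  have hq : (0:ℝ) < β - 1 := by linarith
  -- monotonicity of partition points
  have mono : ∀ n i j, i ≤ j → j ≤ k n → pts n i ≤ pts n j := by
    intro n i j hij hjk
    induction j with
    | zero =>
      interval_cases i
      exact le_refl _
    | succ j ih =>
      rcases Nat.lt_or_ge i (j+1) with h | h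
      · exact (ih (Nat.lt_succ_iff.mp h) (le_trans (Nat.le_succ j) hjk)).trans
          (hmono n j (Nat.lt_of_succ_le hjk))
      · have : i = j+1 := le_antisymm hij h
        simp [this]
  have hlow : ∀ n i, i ≤ k n → s ≤ pts n i := by
    intro n i hi
    have := mono n 0 i (Nat.zero_le _) hi
    rwa [hstart] at this
  have hhigh : ∀ n i, i ≤ k n → pts n i ≤ t := by
    intro n i hi
    have := mono n i (k n) hi le_rfl
    rwa [hend] at this
  rw [Metric.tendsto_atTop]
  intro ε hε
  -- find δ > 0 with C * (t - s) * δ ^ (β - 1) < ε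
  have hcont : Tendsto (fun x : ℝ => C * (t - s) * x ^ (β - 1)) (nhds 0) (nhds 0) := by
    have h1 : ContinuousAt (fun x : ℝ => x ^ (β - 1)) 0 :=
      Real.continuousAt_rpow_const 0 (β - 1) (Or.inr hq.le)
    have h2 : Tendsto (fun x : ℝ => x ^ (β - 1)) (nhds 0) (nhds 0) := by
      have := h1.tendsto
      rwa [Real.zero_rpow hq.ne'] at this
    simpa using h2.const_mul (C * (t - s))
  have hev : ∀ᶠ x in nhdsWithin (0:ℝ) (Set.Ioi 0),
      C * (t - s) * x ^ (β - 1) < ε :=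
    ((hcont.eventually (gt_mem_nhds hε)).filter_mono nhdsWithin_le_nhds)
  obtain ⟨δ, hδε, hδpos⟩ := (hev.and self_mem_nhdsWithin).exists
  obtain ⟨N, hN⟩ := hmesh δ hδpos
  refine ⟨N, fun n hn => ?_⟩
  have htel : f t - f s = ∑ i ∈ Finset.range (k n), (f (pts n (i+1)) - f (pts n i)) := by
    rw [Finset.sum_range_sub (fun i => f (pts n i)), hstart, hend]
  rw [dist_eq_norm, htel, ← Finset.sum_sub_distrib]
  calc ‖∑ i ∈ Finset.range (k n),
        (A (pts n i) (pts n (i+1)) - (f (pts n (i+1)) - f (pts n i)))‖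
      ≤ ∑ i ∈ Finset.range (k n), ‖A (pts n i) (pts n (i+1)) - (f (pts n (i+1)) - f (pts n i))‖ :=
        norm_sum_le _ _
    _ ≤ ∑ i ∈ Finset.range (k n), C * δ ^ (β - 1) * (pts n (i+1) - pts n i) := by
        refine Finset.sum_le_sum fun i hi => ?_
        rw [Finset.mem_range] at hi
        have hu0 : 0 ≤ pts n i := le_trans hs (hlow n i hi.le)
        have huv : pts n i ≤ pts n (i+1) := hmono n i hi
        have hvT : pts n (i+1) ≤ T := le_trans (hhigh n (i+1) hi) htT
        have h1 : ‖A (pts n i) (pts n (i+1)) - (f (pts n (i+1)) - f (pts n i))‖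
            ≤ C * (pts n (i+1) - pts n i) ^ β := by
          rw [norm_sub_rev]
          exact hf _ _ hu0 huv hvT
        refine h1.trans ?_
        set Δ := pts n (i+1) - pts n i with hΔdef
        have hΔ0 : 0 ≤ Δ := by simp [hΔdef]; linarith
        have hΔδ : Δ ≤ δ := hN n hn i hi
        rcases eq_or_lt_of_le hΔ0 with h0 | h0
        · rw [← h0, Real.zero_rpow (by linarith : β ≠ 0)]
          simp
        · have hb : β - 1 + 1 = β := by ring
          have : Δ ^ β = Δ ^ (β - 1) * Δ := by
            rw [← hb, Real.rpow_add_one h0.ne']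
            ring_nf
          rw [this]
          have h2 : Δ ^ (β - 1) ≤ δ ^ (β - 1) :=
            Real.rpow_le_rpow hΔ0 hΔδ hq.le
          have := mul_le_mul_of_nonneg_right h2 hΔ0
          calc C * (Δ ^ (β-1) * Δ) ≤ C * (δ ^ (β-1) * Δ) :=
                mul_le_mul_of_nonneg_left this hC
            _ = C * δ ^ (β-1) * Δ := by ring
    _ = C * δ ^ (β - 1) * (t - s) := by
        rw [← Finset.mul_sum, Finset.sum_range_sub (fun i => pts n i), hstart, hend]
    _ < ε := by
        calc C * δ ^ (β-1) * (t - s) = C * (t - s) * δ ^ (β-1) := by ring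
          _ < ε := hδε
end

section
/- Stability of the sewing under convergence of germs: Let E be a real Banach space, T > 0, 0 < α ≤ 1 < β, R ≥ 0 and K ≥ 0. Let A and, for each n ∈ ℕ, Aⁿ be maps Δ₂ → E vanishing on the diagonal, with ‖δA‖_β ≤ R and ‖δAⁿ‖_β ≤ R for all n, and suppose ‖Aⁿ − A‖_α → 0 as n → ∞. Let f and fⁿ be functions [0,T] → E with f(0) = fⁿ(0) = 0 satisfying ‖f_{s,t} − A_{s,t}‖_E ≤ K(t−s)^β and ‖fⁿ_{s,t} − Aⁿ_{s,t}‖_E ≤ K(t−s)^β for all 0 ≤ s ≤ t ≤ T and all n. Then sup_{0 ≤ s < t ≤ T} ‖(fⁿ(t) − fⁿ(s)) − (f(t) − f(s))‖_E/(t−s)^α → 0 as n → ∞. -/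
open Filter Topology

/-! Cut `[s, t]` into `m` pieces of length `h = (t - s) / m`. On each piece the increment of
`fⁿ - f` is at most `2K h^β + ‖Aⁿ - A‖_α h^α`, so summing gives
`(2K T^(β-α) m^(1-β) + m ‖Aⁿ - A‖_α) (t - s)^α`. As `β > 1`, first choose `m` to make the
first term small, then `n` large to make the second one small. -/

theorem Real.rpow_le_rpow_sub_mul_rpow {x T α β : ℝ} (hx : 0 ≤ x) (hxT : x ≤ T) (hα : 0 ≤ α)
    (hαβ : α ≤ β) : x ^ β ≤ T ^ (β - α) * x ^ α := by
  calc x ^ β = x ^ (β - α) * x ^ α := by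
        rw [← Real.rpow_add_of_nonneg hx (sub_nonneg.2 hαβ) hα, sub_add_cancel]
    _ ≤ T ^ (β - α) * x ^ α := by gcongr

theorem exists_nat_ne_zero_mul_rpow_le {β : ℝ} (hβ : 1 < β) (C : ℝ) {ε : ℝ} (hε : 0 < ε) :
    ∃ m : ℕ, m ≠ 0 ∧ C * (m : ℝ) ^ (1 - β) ≤ ε := by
  have hlim : Tendsto (fun m : ℕ => C * (m : ℝ) ^ (1 - β)) atTop (𝓝 0) := by
    rw [← neg_sub β 1, ← mul_zero C]
    exact ((tendsto_rpow_neg_atTop (sub_pos.2 hβ)).comp tendsto_natCast_atTop_atTop).const_mul C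
  exact ((hlim.eventually (ge_mem_nhds hε)).and (eventually_ne_atTop 0)).exists.imp
    fun _ h => h.symm

theorem norm_sub_le_mul_of_uniform_partition {E : Type*} [SeminormedAddCommGroup E]
    {g : ℝ → E} {s t c : ℝ} {m : ℕ} (hm : m ≠ 0) (hst : s ≤ t)
    (hg : ∀ u v, s ≤ u → v ≤ t → v - u = (t - s) / m → ‖g v - g u‖ ≤ c) :
    ‖g t - g s‖ ≤ m * c := by
  set p : ℕ → ℝ := fun i => s + i * ((t - s) / m)
  have hmpos : (0 : ℝ) < m := Nat.cast_pos.2 (Nat.pos_of_ne_zero hm)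
  have hp0 : p 0 = s := by simp [p]
  have hpm : p m = t := by simp only [p]; field_simp; ring
  have hp_le : ∀ i ≤ m, s ≤ p i ∧ p i ≤ t := by
    intro i hi
    have hi' : (i : ℝ) ≤ m := by exact_mod_cast hi
    have hh : 0 ≤ (t - s) / m := div_nonneg (sub_nonneg.2 hst) hmpos.le
    refine ⟨le_add_of_nonneg_right (by positivity), ?_⟩
    calc p i ≤ s + m * ((t - s) / m) := by simp only [p]; gcongr
      _ = t := hpm
  calc ‖g t - g s‖ = ‖∑ i ∈ Finset.range m, (g (p (i + 1)) - g (p i))‖ := by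
        rw [Finset.sum_range_sub (fun i => g (p i)), hp0, hpm]
    _ ≤ ∑ i ∈ Finset.range m, ‖g (p (i + 1)) - g (p i)‖ := norm_sum_le _ _
    _ ≤ ∑ _i ∈ Finset.range m, c := by
        refine Finset.sum_le_sum fun i hi => hg _ _ (hp_le i (Finset.mem_range.1 hi).le).1
          (hp_le (i + 1) (Finset.mem_range.1 hi)).2 ?_
        simp only [p]; push_cast; ring
    _ = m * c := by rw [Finset.sum_const, Finset.card_range, nsmul_eq_mul]

theorem norm_sub_le_mul_rpow_of_local_bound {E : Type*} [SeminormedAddCommGroup E]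
    {D : ℝ → E} {T α β K η : ℝ} (hα : 0 ≤ α) (hαβ : α ≤ β) (hK : 0 ≤ K) (hη : 0 ≤ η)
    (hD : ∀ u v, 0 ≤ u → u ≤ v → v ≤ T →
      ‖D v - D u‖ ≤ K * (v - u) ^ β + η * (v - u) ^ α)
    {m : ℕ} (hm : m ≠ 0) {s t : ℝ} (hs : 0 ≤ s) (hst : s ≤ t) (htT : t ≤ T) :
    ‖D t - D s‖ ≤ (K * T ^ (β - α) * (m : ℝ) ^ (1 - β) + m * η) * (t - s) ^ α := by
  have hmpos : (0 : ℝ) < m := Nat.cast_pos.2 (Nat.pos_of_ne_zero hm)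
  have hts : 0 ≤ t - s := sub_nonneg.2 hst
  have hh : 0 ≤ (t - s) / m := div_nonneg hts hmpos.le
  have hhts : (t - s) / m ≤ t - s := div_le_self hts (Nat.one_le_cast.2 (Nat.pos_of_ne_zero hm))
  have hpart := norm_sub_le_mul_of_uniform_partition (g := D)
    (c := K * ((t - s) / m) ^ β + η * ((t - s) / m) ^ α) hm hst
    fun u v hsu hvt huv => huv ▸ hD u v (hs.trans hsu) (by linarith) (hvt.trans htT)
  have hscale : (m : ℝ) * ((t - s) / m) ^ β = (m : ℝ) ^ (1 - β) * (t - s) ^ β := by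
    rw [Real.div_rpow hts hmpos.le, Real.rpow_sub hmpos, Real.rpow_one]
    ring
  calc ‖D t - D s‖ ≤ K * (m * ((t - s) / m) ^ β) + m * η * ((t - s) / m) ^ α := by
        linarith
    _ ≤ K * ((m : ℝ) ^ (1 - β) * (T ^ (β - α) * (t - s) ^ α)) + m * η * (t - s) ^ α := by
        rw [hscale]
        gcongr
        exact Real.rpow_le_rpow_sub_mul_rpow hts (by linarith) hα hαβ
    _ = (K * T ^ (β - α) * (m : ℝ) ^ (1 - β) + m * η) * (t - s) ^ α := by ring

theorem sewing_stability_general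
    {E : Type*} [NormedAddCommGroup E]
    (T α β K : ℝ) (hα : 0 < α) (hα1 : α ≤ 1) (hβ : 1 < β)
    (hK : 0 ≤ K)
    (A : ℝ → ℝ → E) (An : ℕ → ℝ → ℝ → E) (f : ℝ → E) (fn : ℕ → ℝ → E)
    (hAconv : ∀ ε : ℝ, 0 < ε → ∃ N : ℕ, ∀ n ≥ N, ∀ s t : ℝ, 0 ≤ s → s ≤ t → t ≤ T →
      ‖An n s t - A s t‖ ≤ ε * (t - s) ^ α)
    (hf : ∀ s t : ℝ, 0 ≤ s → s ≤ t → t ≤ T →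
      ‖(f t - f s) - A s t‖ ≤ K * (t - s) ^ β)
    (hfn : ∀ n, ∀ s t : ℝ, 0 ≤ s → s ≤ t → t ≤ T →
      ‖(fn n t - fn n s) - An n s t‖ ≤ K * (t - s) ^ β) :
    ∀ ε : ℝ, 0 < ε → ∃ N : ℕ, ∀ n ≥ N, ∀ s t : ℝ, 0 ≤ s → s ≤ t → t ≤ T →
      ‖(fn n t - fn n s) - (f t - f s)‖ ≤ ε * (t - s) ^ α := by
  intro ε hε
  obtain ⟨m, hm, hmε⟩ := exists_nat_ne_zero_mul_rpow_le hβ (2 * K * T ^ (β - α)) (half_pos hε)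
  obtain ⟨N, hN⟩ := hAconv (ε / (2 * m)) (by positivity)
  refine ⟨N, fun n hn s t hs hst htT => ?_⟩
  have hlocal : ∀ u v, 0 ≤ u → u ≤ v → v ≤ T →
      ‖(fn n v - f v) - (fn n u - f u)‖ ≤ 2 * K * (v - u) ^ β + ε / (2 * m) * (v - u) ^ α := by
    intro u v hu huv hvT
    rw [sub_sub_sub_comm]
    calc ‖(fn n v - fn n u) - (f v - f u)‖
        ≤ ‖(fn n v - fn n u) - An n u v‖ + (‖An n u v - A u v‖ + ‖A u v - (f v - f u)‖) := by
          grw [norm_sub_le_norm_sub_add_norm_sub _ (An n u v),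
            norm_sub_le_norm_sub_add_norm_sub (An n u v) (A u v)]
      _ ≤ K * (v - u) ^ β + (ε / (2 * m) * (v - u) ^ α + K * (v - u) ^ β) := by
          rw [norm_sub_rev (A u v)]
          gcongr
          exacts [hfn n u v hu huv hvT, hN n hn u v hu huv hvT, hf u v hu huv hvT]
      _ = 2 * K * (v - u) ^ β + ε / (2 * m) * (v - u) ^ α := by ring
  rw [sub_sub_sub_comm]
  calc _ ≤ (2 * K * T ^ (β - α) * (m : ℝ) ^ (1 - β) + m * (ε / (2 * m))) * (t - s) ^ α :=
        norm_sub_le_mul_rpow_of_local_bound hα.le (by linarith) (by positivity) (by positivity)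
          hlocal hm hs hst htT
    _ ≤ ε * (t - s) ^ α := by
        gcongr
        have hhalf : (m : ℝ) * (ε / (2 * m)) = ε / 2 := by field_simp
        linarith

/-- Stability of the sewing under convergence of germs: let `0 < α ≤ 1 < β`, let `A` and
`Aⁿ` be germs vanishing on the diagonal with `‖δA‖_β ≤ R`, `‖δAⁿ‖_β ≤ R`, and
`‖Aⁿ − A‖_α → 0`. If `f, fⁿ : [0,T] → E` vanish at `0` and satisfy
`‖f_{s,t} − A_{s,t}‖ ≤ K (t−s)^β` and `‖fⁿ_{s,t} − Aⁿ_{s,t}‖ ≤ K (t−s)^β`, then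
`‖fⁿ − f‖_α := sup ‖(fⁿ(t) − fⁿ(s)) − (f(t) − f(s))‖/(t−s)^α → 0`, expressed here in
`ε`-`N` form. -/
theorem sewing_stability
    {E : Type*} [NormedAddCommGroup E] [NormedSpace ℝ E]
    (T α β R K : ℝ) (hT : 0 < T) (hα : 0 < α) (hα1 : α ≤ 1) (hβ : 1 < β)
    (hR : 0 ≤ R) (hK : 0 ≤ K)
    (A : ℝ → ℝ → E) (An : ℕ → ℝ → ℝ → E) (f : ℝ → E) (fn : ℕ → ℝ → E)
    (hdiag : ∀ t ∈ Set.Icc (0 : ℝ) T, A t t = 0)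
    (hdiagn : ∀ n, ∀ t ∈ Set.Icc (0 : ℝ) T, An n t t = 0)
    (hδA : ∀ s u t : ℝ, 0 ≤ s → s ≤ u → u ≤ t → t ≤ T →
      ‖A s t - A s u - A u t‖ ≤ R * (t - s) ^ β)
    (hδAn : ∀ n, ∀ s u t : ℝ, 0 ≤ s → s ≤ u → u ≤ t → t ≤ T →
      ‖An n s t - An n s u - An n u t‖ ≤ R * (t - s) ^ β)
    (hAconv : ∀ ε : ℝ, 0 < ε → ∃ N : ℕ, ∀ n ≥ N, ∀ s t : ℝ, 0 ≤ s → s ≤ t → t ≤ T →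
      ‖An n s t - A s t‖ ≤ ε * (t - s) ^ α)
    (hf0 : f 0 = 0) (hfn0 : ∀ n, fn n 0 = 0)
    (hf : ∀ s t : ℝ, 0 ≤ s → s ≤ t → t ≤ T →
      ‖(f t - f s) - A s t‖ ≤ K * (t - s) ^ β)
    (hfn : ∀ n, ∀ s t : ℝ, 0 ≤ s → s ≤ t → t ≤ T →
      ‖(fn n t - fn n s) - An n s t‖ ≤ K * (t - s) ^ β) :
    ∀ ε : ℝ, 0 < ε → ∃ N : ℕ, ∀ n ≥ N, ∀ s t : ℝ, 0 ≤ s → s ≤ t → t ≤ T →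
      ‖(fn n t - fn n s) - (f t - f s)‖ ≤ ε * (t - s) ^ α :=
  sewing_stability_general T α β K hα hα1 hβ hK A An f fn hAconv hf hfn
end

section
/- Stochastic Sewing Lemma (uniqueness up to modification): Let (Ω, F, P) be a probability space with a filtration (F_t)_{t∈[0,T]}, T > 0, p ∈ [2,∞), d ≥ 1, and let A : Δ₂ → L^p(Ω; ℝ^d) with A_{t,t} = 0 and A_{s,t} F_t-measurable for all s ≤ t. Let ε₁, ε₂ > 0 and C₁, C₂ ≥ 0. Suppose 𝒜 and 𝒜' are (F_t)-adapted processes with values in L^p(Ω; ℝ^d), with 𝒜_0 = 𝒜'_0 = 0 almost surely, and such that for i ∈ {1,2} and all 0 ≤ s ≤ t ≤ T: ‖𝒜_t − 𝒜_s − A_{s,t}‖_{L^p(Ω)} ≤ C_i (t−s)^{1/2+ε₂}, ‖E[𝒜_t − 𝒜_s − A_{s,t} | F_s]‖_{L^p(Ω)} ≤ C_i (t−s)^{1+ε₁} (with C₁ used for 𝒜 and C₂ for 𝒜'). Then 𝒜' is a modification of 𝒜: for every t ∈ [0,T], 𝒜_t = 𝒜'_t almost surely. -/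
/-!
Put `D = 𝒜 - 𝒜'`. The germ `A` cancels, so `D` is an adapted `L²` process with
`‖D_u - D_s‖ ≲ (u - s)^{1/2+ε₂}` and `‖E[D_u - D_s | F_s]‖ ≲ (u - s)^{1+ε₁}`. On the uniform
partition of `[0, t]` into `n` pieces, split every increment into its conditional expectation
given the left endpoint and a martingale difference. The martingale differences are orthogonal
in `L²`, so their sum has norm `O(√n · n^{-1/2-ε₂})`, while the conditional expectations add up
to `O(n · n^{-1-ε₁})`. Letting `n → ∞` gives `D_t = 0`.
-/

open MeasureTheory Filter Topology
open scoped ENNReal RealInnerProductSpace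

section InnerProductSpace

variable {ι E : Type*} [Fintype ι] [NormedAddCommGroup E] [InnerProductSpace ℝ E]

theorem norm_sum_sq_eq_sum_norm_sq_of_pairwise_inner_eq_zero (v : ι → E)
    (hv : Pairwise fun i j => ⟪v i, v j⟫ = 0) :
    ‖∑ i, v i‖ ^ 2 = ∑ i, ‖v i‖ ^ 2 := by
  rw [← real_inner_self_eq_norm_sq, sum_inner]
  refine Finset.sum_congr rfl fun i _ => ?_
  rw [inner_sum, Finset.sum_eq_single i (fun j _ hji => hv hji.symm) (by simp),
    real_inner_self_eq_norm_sq]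

theorem norm_sum_add_le_of_pairwise_inner_eq_zero (u w : ι → E)
    (hu : Pairwise fun i j => ⟪u i, u j⟫ = 0) {α β : ℝ} (hα₀ : 0 ≤ α)
    (hα : ∀ i, ‖u i‖ ≤ α) (hβ : ∀ i, ‖w i‖ ≤ β) :
    ‖∑ i, (u i + w i)‖ ≤ √(Fintype.card ι) * α + Fintype.card ι * β := by
  have hu_sum : ‖∑ i, u i‖ ≤ √(Fintype.card ι) * α := by
    rw [← Real.sqrt_sq (norm_nonneg _), ← Real.sqrt_sq hα₀, ← Real.sqrt_mul (Nat.cast_nonneg _),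
      norm_sum_sq_eq_sum_norm_sq_of_pairwise_inner_eq_zero u hu]
    refine Real.sqrt_le_sqrt ?_
    calc ∑ i, ‖u i‖ ^ 2 ≤ ∑ _i : ι, α ^ 2 :=
          Finset.sum_le_sum fun i _ => pow_le_pow_left₀ (norm_nonneg _) (hα i) 2
      _ = Fintype.card ι * α ^ 2 := by rw [Finset.sum_const, Finset.card_univ, nsmul_eq_mul]
  have hw_sum : ‖∑ i, w i‖ ≤ Fintype.card ι * β := by
    simpa using norm_sum_le_of_le Finset.univ fun i _ => hβ i
  rw [Finset.sum_add_distrib]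
  exact (norm_add_le _ _).trans (add_le_add hu_sum hw_sum)

end InnerProductSpace

theorem tendsto_rpow_mul_div_rpow_atTop_nhds_zero {t q r : ℝ} (ht : 0 ≤ t) (hqr : q < r) :
    Tendsto (fun n : ℕ => (n : ℝ) ^ q * (t / n) ^ r) atTop (𝓝 0) := by
  have hpow : Tendsto (fun n : ℕ => (n : ℝ) ^ (-(r - q))) atTop (𝓝 0) :=
    (tendsto_rpow_neg_atTop (sub_pos.mpr hqr)).comp tendsto_natCast_atTop_atTop
  have hlim : Tendsto (fun n : ℕ => t ^ r * (n : ℝ) ^ (-(r - q))) atTop (𝓝 0) := by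
    simpa using hpow.const_mul (t ^ r)
  refine hlim.congr' ?_
  filter_upwards [eventually_gt_atTop 0] with n hn
  have hn : (0 : ℝ) < n := Nat.cast_pos.mpr hn
  rw [Real.div_rpow ht hn.le, neg_sub, Real.rpow_sub hn]
  ring

namespace MeasureTheory

section eLpNorm

variable {Ω E : Type*} {m m0 : MeasurableSpace Ω} {μ : Measure Ω} [IsProbabilityMeasure μ]
  [NormedAddCommGroup E] {p : ℝ≥0∞} {f g : Ω → E} {C₁ C₂ x : ℝ}

theorem eLpNorm_sub_le_ofReal_add_mul (hp : 2 ≤ p) (hf : AEStronglyMeasurable f μ)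
    (hg : AEStronglyMeasurable g μ) (hC₁ : 0 ≤ C₁) (hC₂ : 0 ≤ C₂) (hx : 0 ≤ x)
    (hfC : eLpNorm f p μ ≤ ENNReal.ofReal (C₁ * x))
    (hgC : eLpNorm g p μ ≤ ENNReal.ofReal (C₂ * x)) :
    eLpNorm (f - g) 2 μ ≤ ENNReal.ofReal ((C₁ + C₂) * x) :=
  calc eLpNorm (f - g) 2 μ ≤ eLpNorm (f - g) p μ :=
        eLpNorm_le_eLpNorm_of_exponent_le hp (hf.sub hg)
    _ ≤ eLpNorm f p μ + eLpNorm g p μ := eLpNorm_sub_le hf hg (one_le_two.trans hp)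
    _ ≤ ENNReal.ofReal (C₁ * x) + ENNReal.ofReal (C₂ * x) := add_le_add hfC hgC
    _ = ENNReal.ofReal ((C₁ + C₂) * x) := by
        rw [add_mul, ENNReal.ofReal_add (mul_nonneg hC₁ hx) (mul_nonneg hC₂ hx)]

theorem eLpNorm_condExp_sub_le_ofReal_add_mul [NormedSpace ℝ E] [CompleteSpace E] (hp : 2 ≤ p)
    (hf : MemLp f p μ) (hg : MemLp g p μ) (hC₁ : 0 ≤ C₁) (hC₂ : 0 ≤ C₂) (hx : 0 ≤ x)
    (hfC : eLpNorm μ[f | m] p μ ≤ ENNReal.ofReal (C₁ * x))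
    (hgC : eLpNorm μ[g | m] p μ ≤ ENNReal.ofReal (C₂ * x)) :
    eLpNorm μ[f - g | m] 2 μ ≤ ENNReal.ofReal ((C₁ + C₂) * x) := by
  have hp1 : 1 ≤ p := one_le_two.trans hp
  rw [eLpNorm_congr_ae (condExp_sub (hf.integrable hp1) (hg.integrable hp1) m)]
  exact eLpNorm_sub_le_ofReal_add_mul hp integrable_condExp.aestronglyMeasurable
    integrable_condExp.aestronglyMeasurable hC₁ hC₂ hx hfC hgC

end eLpNorm

variable {Ω E : Type*} {m m0 : MeasurableSpace Ω} {μ : Measure Ω}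
  [NormedAddCommGroup E] [InnerProductSpace ℝ E] [CompleteSpace E]

theorem inner_sub_condExpL2_eq_zero (hm : m ≤ m0) (f g : Ω →₂[μ] E)
    (hg : AEStronglyMeasurable[m] g μ) :
    ⟪f - (condExpL2 E ℝ hm f : Ω →₂[μ] E), g⟫ = 0 := by
  rw [inner_sub_left, inner_condExpL2_eq_inner_fun hm f g hg, sub_self]

theorem aestronglyMeasurable_sub_condExpL2 {m' : MeasurableSpace Ω} (hm' : m' ≤ m0)
    (hm'm : m' ≤ m) {f : Ω →₂[μ] E} (hf : AEStronglyMeasurable[m] f μ) :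
    AEStronglyMeasurable[m] (⇑(f - (condExpL2 E ℝ hm' f : Ω →₂[μ] E))) μ :=
  (hf.sub ((aestronglyMeasurable_condExpL2 hm' f).mono hm'm)).congr (Lp.coeFn_sub _ _).symm

theorem norm_condExpL2_toLp [IsFiniteMeasure μ] (hm : m ≤ m0) {f : Ω → E} (hf : MemLp f 2 μ) :
    ‖(condExpL2 E ℝ hm hf.toLp : Ω →₂[μ] E)‖ = (eLpNorm μ[f | m] 2 μ).toReal := by
  rw [Lp.norm_def, eLpNorm_congr_ae (hf.condExpL2_ae_eq_condExp hm)]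
theorem inner_sub_condExpL2_increments_eq_zero (ℱ : Filtration ℝ m0) (X : ℝ → Ω →₂[μ] E)
    {s u s' u' : ℝ} (hsu : s ≤ u) (hus' : u ≤ s') (hXs : AEStronglyMeasurable[ℱ s] (X s) μ)
    (hXu : AEStronglyMeasurable[ℱ u] (X u) μ) :
    ⟪(X u' - X s') - (condExpL2 E ℝ (ℱ.le s') (X u' - X s') : Ω →₂[μ] E),
      (X u - X s) - (condExpL2 E ℝ (ℱ.le s) (X u - X s) : Ω →₂[μ] E)⟫ = 0 := by
  have hinc : AEStronglyMeasurable[ℱ s'] (X u - X s) μ :=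
    ((hXu.mono (ℱ.mono hus')).sub (hXs.mono (ℱ.mono (hsu.trans hus')))).congr
      (Lp.coeFn_sub _ _).symm
  exact inner_sub_condExpL2_eq_zero _ _ _
    (aestronglyMeasurable_sub_condExpL2 _ (ℱ.mono (hsu.trans hus')) hinc)

theorem norm_sub_le_of_uniform_grid (ℱ : Filtration ℝ m0) (X : ℝ → Ω →₂[μ] E) {t : ℝ}
    (ht : 0 ≤ t) {φ ψ : ℝ → ℝ} (hX : ∀ s ∈ Set.Icc 0 t, AEStronglyMeasurable[ℱ s] (X s) μ)
    (hinc : ∀ s u, 0 ≤ s → s ≤ u → u ≤ t → ‖X u - X s‖ ≤ φ (u - s))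
    (hcond : ∀ s u, 0 ≤ s → s ≤ u → u ≤ t →
      ‖(condExpL2 E ℝ (ℱ.le s) (X u - X s) : Ω →₂[μ] E)‖ ≤ ψ (u - s))
    {n : ℕ} (hn : 0 < n) :
    ‖X t - X 0‖ ≤ √n * (2 * φ (t / n)) + n * ψ (t / n) := by
  have hn' : (0 : ℝ) < n := Nat.cast_pos.mpr hn
  set τ : ℕ → ℝ := fun i => i * t / n with hτ
  have hτ_mono : Monotone τ := fun i j hij => by
    simp only [hτ]; gcongr
  have hτ_mem : ∀ i ≤ n, τ i ∈ Set.Icc 0 t := fun i hi =>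
    ⟨by positivity, by simpa [hτ, hn'.ne'] using hτ_mono hi⟩
  have hτ_step : ∀ i, τ (i + 1) - τ i = t / n := fun i => by
    simp only [hτ]; push_cast; ring
  set δ : Fin n → Ω →₂[μ] E := fun i => X (τ (i + 1)) - X (τ i) with hδ_def
  set G : Fin n → Ω →₂[μ] E := fun i => condExpL2 E ℝ (ℱ.le (τ i)) (δ i)
  have hsum : X t - X 0 = ∑ i, ((δ i - G i) + G i) := by
    simp only [sub_add_cancel, hδ_def]
    rw [Fin.sum_univ_eq_sum_range (fun i => X (τ (i + 1)) - X (τ i)),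
      Finset.sum_range_sub (fun i => X (τ i))]
    simp [hτ, hn'.ne']
  have hδ : ∀ i : Fin n, ‖δ i‖ ≤ φ (t / n) := fun i => by
    simpa only [hτ_step] using hinc _ _ (hτ_mem i i.isLt.le).1 (hτ_mono (Nat.le_succ i))
      (hτ_mem (i + 1) i.isLt).2
  have hG : ∀ i : Fin n, ‖G i‖ ≤ ψ (t / n) := fun i => by
    simpa only [hτ_step] using hcond _ _ (hτ_mem i i.isLt.le).1 (hτ_mono (Nat.le_succ i))
      (hτ_mem (i + 1) i.isLt).2
  have hM : ∀ i : Fin n, ‖δ i - G i‖ ≤ 2 * φ (t / n) := fun i =>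
    calc ‖δ i - G i‖ ≤ ‖δ i‖ + ‖δ i‖ :=
          (norm_sub_le _ _).trans (add_le_add le_rfl (norm_condExpL2_coe_le _ _))
      _ ≤ 2 * φ (t / n) := by linarith [hδ i]
  have horth_lt : ∀ i j : Fin n, i < j → ⟪δ j - G j, δ i - G i⟫ = 0 := fun i j hij =>
    inner_sub_condExpL2_increments_eq_zero ℱ X (hτ_mono (Nat.le_succ i))
      (hτ_mono (Nat.succ_le_of_lt hij)) (hX _ (hτ_mem i i.isLt.le)) (hX _ (hτ_mem _ i.isLt))
  have horth : Pairwise fun i j => ⟪δ i - G i, δ j - G j⟫ = 0 := fun i j hij => by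
    rcases hij.lt_or_gt with h | h
    · rw [real_inner_comm]; exact horth_lt i j h
    · exact horth_lt j i h
  have hφ : 0 ≤ 2 * φ (t / n) := (norm_nonneg _).trans (hM ⟨0, hn⟩)
  rw [hsum]
  simpa using norm_sum_add_le_of_pairwise_inner_eq_zero _ _ horth hφ hM hG

theorem Lp_eq_zero_of_sewing_bounds (ℱ : Filtration ℝ m0) (X : ℝ → Ω →₂[μ] E) {t a b K : ℝ}
    (ht : 0 ≤ t) (ha : 0 < a) (hb : 0 < b)
    (hX : ∀ s ∈ Set.Icc 0 t, AEStronglyMeasurable[ℱ s] (X s) μ) (hX0 : X 0 = 0)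
    (hinc : ∀ s u, 0 ≤ s → s ≤ u → u ≤ t → ‖X u - X s‖ ≤ K * (u - s) ^ (1 / 2 + a))
    (hcond : ∀ s u, 0 ≤ s → s ≤ u → u ≤ t →
      ‖(condExpL2 E ℝ (ℱ.le s) (X u - X s) : Ω →₂[μ] E)‖ ≤ K * (u - s) ^ (1 + b)) :
    X t = 0 := by
  have hbound : ∀ᶠ n : ℕ in atTop, ‖X t‖ ≤
      2 * K * ((n : ℝ) ^ (1 / 2 : ℝ) * (t / n) ^ (1 / 2 + a)) +
        K * ((n : ℝ) ^ (1 : ℝ) * (t / n) ^ (1 + b)) := by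
    filter_upwards [eventually_gt_atTop 0] with n hn
    have hgrid := norm_sub_le_of_uniform_grid ℱ X ht (φ := fun h => K * h ^ (1 / 2 + a))
      (ψ := fun h => K * h ^ (1 + b)) hX hinc hcond hn
    rw [hX0, sub_zero, Real.sqrt_eq_rpow] at hgrid
    rw [Real.rpow_one]
    exact hgrid.trans_eq (by ring)
  have hlim : Tendsto (fun n : ℕ => 2 * K * ((n : ℝ) ^ (1 / 2 : ℝ) * (t / n) ^ (1 / 2 + a)) +
      K * ((n : ℝ) ^ (1 : ℝ) * (t / n) ^ (1 + b))) atTop (𝓝 0) := by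
    simpa only [mul_zero, add_zero] using
      ((tendsto_rpow_mul_div_rpow_atTop_nhds_zero ht (lt_add_of_pos_right (1 / 2) ha)).const_mul
        (2 * K)).add
        ((tendsto_rpow_mul_div_rpow_atTop_nhds_zero ht (lt_add_of_pos_right 1 hb)).const_mul K)
  exact norm_le_zero_iff.mp (ge_of_tendsto hlim hbound)

theorem ae_eq_zero_of_sewing_bounds [IsFiniteMeasure μ] (ℱ : Filtration ℝ m0) (D : ℝ → Ω → E)
    {t a b K : ℝ} (ht : 0 ≤ t) (ha : 0 < a) (hb : 0 < b) (hK : 0 ≤ K)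
    (hD : ∀ s ∈ Set.Icc 0 t, StronglyMeasurable[ℱ s] (D s))
    (hDmem : ∀ s ∈ Set.Icc 0 t, MemLp (D s) 2 μ) (hD0 : D 0 =ᵐ[μ] 0)
    (hinc : ∀ s u, 0 ≤ s → s ≤ u → u ≤ t →
      eLpNorm (D u - D s) 2 μ ≤ ENNReal.ofReal (K * (u - s) ^ (1 / 2 + a)))
    (hcond : ∀ s u, 0 ≤ s → s ≤ u → u ≤ t →
      eLpNorm μ[D u - D s | ℱ s] 2 μ ≤ ENNReal.ofReal (K * (u - s) ^ (1 + b))) :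
    D t =ᵐ[μ] 0 := by
  set X : ℝ → Ω →₂[μ] E := fun s => if hs : s ∈ Set.Icc 0 t then (hDmem s hs).toLp else 0
  have hX : ∀ s (hs : s ∈ Set.Icc 0 t), X s = (hDmem s hs).toLp := fun s hs => dif_pos hs
  have hX_inc : ∀ s u (hs : s ∈ Set.Icc 0 t) (hu : u ∈ Set.Icc 0 t),
      X u - X s = ((hDmem u hu).sub (hDmem s hs)).toLp := fun s u hs hu => by
    rw [hX s hs, hX u hu, MemLp.toLp_sub]
  have hbound_nonneg : ∀ s u : ℝ, s ≤ u → ∀ r : ℝ, 0 ≤ K * (u - s) ^ r := fun s u hsu r =>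
    mul_nonneg hK (Real.rpow_nonneg (sub_nonneg.mpr hsu) r)
  have hXt : X t = 0 := by
    refine Lp_eq_zero_of_sewing_bounds ℱ X (K := K) ht ha hb (fun s hs => ?_) ?_
      (fun s u hs hsu hut => ?_) (fun s u hs hsu hut => ?_)
    · rw [hX s hs]
      exact (hD s hs).aestronglyMeasurable.congr (hDmem s hs).coeFn_toLp.symm
    · rw [hX 0 ⟨le_rfl, ht⟩, Lp.eq_zero_iff_ae_eq_zero]
      exact (hDmem 0 ⟨le_rfl, ht⟩).coeFn_toLp.trans hD0
    · rw [hX_inc s u ⟨hs, hsu.trans hut⟩ ⟨hs.trans hsu, hut⟩, Lp.norm_toLp]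
      exact ENNReal.toReal_le_of_le_ofReal (hbound_nonneg s u hsu _) (hinc s u hs hsu hut)
    · rw [hX_inc s u ⟨hs, hsu.trans hut⟩ ⟨hs.trans hsu, hut⟩, norm_condExpL2_toLp]
      exact ENNReal.toReal_le_of_le_ofReal (hbound_nonneg s u hsu _) (hcond s u hs hsu hut)
  refine (hDmem t ⟨ht, le_rfl⟩).coeFn_toLp.symm.trans ?_
  rw [← hX t ⟨ht, le_rfl⟩, hXt]
  exact Lp.coeFn_zero _ _ _

end MeasureTheory

theorem stochastic_sewing_uniqueness_general
    {Ω : Type*} {m0 : MeasurableSpace Ω} {μ : Measure Ω} [IsProbabilityMeasure μ]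
    (T : ℝ) (ℱ : Filtration ℝ m0)
    (p : ℝ) (hp : 2 ≤ p) (d : ℕ)
    (ε₁ ε₂ C₁ C₂ : ℝ) (hε₁ : 0 < ε₁) (hε₂ : 0 < ε₂) (hC₁ : 0 ≤ C₁) (hC₂ : 0 ≤ C₂)
    (A : ℝ → ℝ → Ω → EuclideanSpace ℝ (Fin d))
    (hLp : ∀ s t : ℝ, 0 ≤ s → s ≤ t → t ≤ T → MemLp (A s t) (ENNReal.ofReal p) μ)
    (𝒜 𝒜' : ℝ → Ω → EuclideanSpace ℝ (Fin d))
    (h𝒜meas : ∀ t ∈ Set.Icc (0 : ℝ) T, StronglyMeasurable[ℱ t] (𝒜 t))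
    (h𝒜'meas : ∀ t ∈ Set.Icc (0 : ℝ) T, StronglyMeasurable[ℱ t] (𝒜' t))
    (h𝒜Lp : ∀ t ∈ Set.Icc (0 : ℝ) T, MemLp (𝒜 t) (ENNReal.ofReal p) μ)
    (h𝒜'Lp : ∀ t ∈ Set.Icc (0 : ℝ) T, MemLp (𝒜' t) (ENNReal.ofReal p) μ)
    (h𝒜0 : ∀ᵐ ω ∂μ, 𝒜 0 ω = 0) (h𝒜'0 : ∀ᵐ ω ∂μ, 𝒜' 0 ω = 0)
    (h𝒜bd : ∀ s t : ℝ, 0 ≤ s → s ≤ t → t ≤ T →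
      eLpNorm (fun ω => 𝒜 t ω - 𝒜 s ω - A s t ω) (ENNReal.ofReal p) μ ≤
        ENNReal.ofReal (C₁ * (t - s) ^ (1 / 2 + ε₂)))
    (h𝒜cond : ∀ s t : ℝ, 0 ≤ s → s ≤ t → t ≤ T →
      eLpNorm (μ[fun ω => 𝒜 t ω - 𝒜 s ω - A s t ω | ℱ s]) (ENNReal.ofReal p) μ ≤
        ENNReal.ofReal (C₁ * (t - s) ^ (1 + ε₁)))
    (h𝒜'bd : ∀ s t : ℝ, 0 ≤ s → s ≤ t → t ≤ T →
      eLpNorm (fun ω => 𝒜' t ω - 𝒜' s ω - A s t ω) (ENNReal.ofReal p) μ ≤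
        ENNReal.ofReal (C₂ * (t - s) ^ (1 / 2 + ε₂)))
    (h𝒜'cond : ∀ s t : ℝ, 0 ≤ s → s ≤ t → t ≤ T →
      eLpNorm (μ[fun ω => 𝒜' t ω - 𝒜' s ω - A s t ω | ℱ s]) (ENNReal.ofReal p) μ ≤
        ENNReal.ofReal (C₂ * (t - s) ^ (1 + ε₁))) :
    ∀ t ∈ Set.Icc (0 : ℝ) T, ∀ᵐ ω ∂μ, 𝒜 t ω = 𝒜' t ω := by
  intro t ⟨ht, htT⟩
  have hp2 : (2 : ℝ≥0∞) ≤ ENNReal.ofReal p := by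
    rw [← ENNReal.ofReal_ofNat 2]; exact ENNReal.ofReal_le_ofReal hp
  have hIcc : ∀ s ∈ Set.Icc 0 t, s ∈ Set.Icc 0 T := fun s hs => ⟨hs.1, hs.2.trans htT⟩
  have hbounds : ∀ s u, 0 ≤ s → s ≤ u → u ≤ T →
      eLpNorm ((𝒜 u - 𝒜' u) - (𝒜 s - 𝒜' s)) 2 μ ≤
          ENNReal.ofReal ((C₁ + C₂) * (u - s) ^ (1 / 2 + ε₂)) ∧
        eLpNorm μ[(𝒜 u - 𝒜' u) - (𝒜 s - 𝒜' s) | ℱ s] 2 μ ≤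
          ENNReal.ofReal ((C₁ + C₂) * (u - s) ^ (1 + ε₁)) := by
    intro s u hs hsu huT
    have hsI : s ∈ Set.Icc 0 T := ⟨hs, hsu.trans huT⟩
    have huI : u ∈ Set.Icc 0 T := ⟨hs.trans hsu, huT⟩
    have hR := ((h𝒜Lp u huI).sub (h𝒜Lp s hsI)).sub (hLp s u hs hsu huT)
    have hR' := ((h𝒜'Lp u huI).sub (h𝒜'Lp s hsI)).sub (hLp s u hs hsu huT)
    have hx : ∀ r : ℝ, 0 ≤ (u - s) ^ r := fun r => Real.rpow_nonneg (sub_nonneg.mpr hsu) r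
    have hsplit : (𝒜 u - 𝒜' u) - (𝒜 s - 𝒜' s) =
        (fun ω => 𝒜 u ω - 𝒜 s ω - A s u ω) - (fun ω => 𝒜' u ω - 𝒜' s ω - A s u ω) := by
      funext ω; simp only [Pi.sub_apply]; abel
    rw [hsplit]
    exact ⟨eLpNorm_sub_le_ofReal_add_mul hp2 hR.aestronglyMeasurable hR'.aestronglyMeasurable
        hC₁ hC₂ (hx _) (h𝒜bd s u hs hsu huT) (h𝒜'bd s u hs hsu huT),
      eLpNorm_condExp_sub_le_ofReal_add_mul hp2 hR hR' hC₁ hC₂ (hx _)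
        (h𝒜cond s u hs hsu huT) (h𝒜'cond s u hs hsu huT)⟩
  filter_upwards [ae_eq_zero_of_sewing_bounds ℱ (fun s => 𝒜 s - 𝒜' s) ht hε₂ hε₁
    (add_nonneg hC₁ hC₂) (fun s hs => (h𝒜meas s (hIcc s hs)).sub (h𝒜'meas s (hIcc s hs)))
    (fun s hs => ((h𝒜Lp s (hIcc s hs)).sub (h𝒜'Lp s (hIcc s hs))).mono_exponent hp2)
    (by simpa using EventuallyEq.sub h𝒜0 h𝒜'0)
    (fun s u hs hsu hut => (hbounds s u hs hsu (hut.trans htT)).1)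
    (fun s u hs hsu hut => (hbounds s u hs hsu (hut.trans htT)).2)] with ω hω
  exact sub_eq_zero.mp hω

/-- Stochastic Sewing Lemma (uniqueness up to modification): if two adapted `L^p`
processes `𝒜`, `𝒜'` start at `0` a.s. and both satisfy the a priori bounds
`‖𝒜_t − 𝒜_s − A_{s,t}‖_{L^p} ≤ Cᵢ (t−s)^{1/2+ε₂}` and
`‖E[𝒜_t − 𝒜_s − A_{s,t} | F_s]‖_{L^p} ≤ Cᵢ (t−s)^{1+ε₁}` (with `C₁` for `𝒜` and `C₂`
for `𝒜'`), then `𝒜'` is a modification of `𝒜`: for every `t ∈ [0,T]`, `𝒜_t = 𝒜'_t`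
almost surely. -/
theorem stochastic_sewing_uniqueness
    {Ω : Type*} {m0 : MeasurableSpace Ω} {μ : Measure Ω} [IsProbabilityMeasure μ]
    (T : ℝ) (hT : 0 < T) (ℱ : Filtration ℝ m0)
    (p : ℝ) (hp : 2 ≤ p) (d : ℕ) (hd : 1 ≤ d)
    (ε₁ ε₂ C₁ C₂ : ℝ) (hε₁ : 0 < ε₁) (hε₂ : 0 < ε₂) (hC₁ : 0 ≤ C₁) (hC₂ : 0 ≤ C₂)
    (A : ℝ → ℝ → Ω → EuclideanSpace ℝ (Fin d))
    (hdiag : ∀ t ∈ Set.Icc (0 : ℝ) T, ∀ ω, A t t ω = 0)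
    (hmeas : ∀ s t : ℝ, 0 ≤ s → s ≤ t → t ≤ T → StronglyMeasurable[ℱ t] (A s t))
    (hLp : ∀ s t : ℝ, 0 ≤ s → s ≤ t → t ≤ T → MemLp (A s t) (ENNReal.ofReal p) μ)
    (𝒜 𝒜' : ℝ → Ω → EuclideanSpace ℝ (Fin d))
    (h𝒜meas : ∀ t ∈ Set.Icc (0 : ℝ) T, StronglyMeasurable[ℱ t] (𝒜 t))
    (h𝒜'meas : ∀ t ∈ Set.Icc (0 : ℝ) T, StronglyMeasurable[ℱ t] (𝒜' t))
    (h𝒜Lp : ∀ t ∈ Set.Icc (0 : ℝ) T, MemLp (𝒜 t) (ENNReal.ofReal p) μ)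
    (h𝒜'Lp : ∀ t ∈ Set.Icc (0 : ℝ) T, MemLp (𝒜' t) (ENNReal.ofReal p) μ)
    (h𝒜0 : ∀ᵐ ω ∂μ, 𝒜 0 ω = 0) (h𝒜'0 : ∀ᵐ ω ∂μ, 𝒜' 0 ω = 0)
    (h𝒜bd : ∀ s t : ℝ, 0 ≤ s → s ≤ t → t ≤ T →
      eLpNorm (fun ω => 𝒜 t ω - 𝒜 s ω - A s t ω) (ENNReal.ofReal p) μ ≤
        ENNReal.ofReal (C₁ * (t - s) ^ (1 / 2 + ε₂)))
    (h𝒜cond : ∀ s t : ℝ, 0 ≤ s → s ≤ t → t ≤ T →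
      eLpNorm (μ[fun ω => 𝒜 t ω - 𝒜 s ω - A s t ω | ℱ s]) (ENNReal.ofReal p) μ ≤
        ENNReal.ofReal (C₁ * (t - s) ^ (1 + ε₁)))
    (h𝒜'bd : ∀ s t : ℝ, 0 ≤ s → s ≤ t → t ≤ T →
      eLpNorm (fun ω => 𝒜' t ω - 𝒜' s ω - A s t ω) (ENNReal.ofReal p) μ ≤
        ENNReal.ofReal (C₂ * (t - s) ^ (1 / 2 + ε₂)))
    (h𝒜'cond : ∀ s t : ℝ, 0 ≤ s → s ≤ t → t ≤ T →
      eLpNorm (μ[fun ω => 𝒜' t ω - 𝒜' s ω - A s t ω | ℱ s]) (ENNReal.ofReal p) μ ≤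
        ENNReal.ofReal (C₂ * (t - s) ^ (1 + ε₁))) :
    ∀ t ∈ Set.Icc (0 : ℝ) T, ∀ᵐ ω ∂μ, 𝒜 t ω = 𝒜' t ω :=
  stochastic_sewing_uniqueness_general T ℱ p hp d ε₁ ε₂ C₁ C₂ hε₁ hε₂ hC₁ hC₂ A hLp 𝒜 𝒜' h𝒜meas
    h𝒜'meas h𝒜Lp h𝒜'Lp h𝒜0 h𝒜'0 h𝒜bd h𝒜cond h𝒜'bd h𝒜'cond
end
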